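/- Let t ≥ 3 be a natural number and let G be a finite simple graph that contains an induced diamond. Let S be an independent set of G such that G ⊕ S is diamond-free and K_{1,t}-free. Then S is exactly the set of all vertices of G that occur as a degree-2 vertex of some induced diamond of G. -/

import Mathlib

/-- Subgraph complementation: `scompl G S` complements the subgraph of `G` induced by `S`. -/
def scompl {V : Type*} (G : SimpleGraph V) (S : Set V) : SimpleGraph V where
  Adj x y := x ≠ y ∧ ((x ∈ S ∧ y ∈ S ∧ ¬ G.Adj x y) ∨ (¬(x ∈ S ∧ y ∈ S) ∧ G.Adj x y))
  symm := by
    constructor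
    rintro x y ⟨hxy, h⟩
    refine ⟨hxy.symm, ?_⟩
    rcases h with ⟨hx, hy, h⟩ | ⟨h, hadj⟩
    · exact Or.inl ⟨hy, hx, fun h' => h (h'.symm)⟩
    · exact Or.inr ⟨fun hc => h ⟨hc.2, hc.1⟩, hadj.symm⟩
  loopless := ⟨fun x h => h.1 rfl⟩

/-- Degree of a vertex in a finite simple graph. -/
noncomputable def deg {V : Type*} [Fintype V] (G : SimpleGraph V) (v : V) : ℕ :=
  (G.neighborSet v).ncard

/-- `a, b, c, d` form an induced diamond with `a`, `b` its degree-2 vertices. -/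
def IsDiamond {V : Type*} (G : SimpleGraph V) (a b c d : V) : Prop :=
  a ≠ b ∧ a ≠ c ∧ a ≠ d ∧ b ≠ c ∧ b ≠ d ∧ c ≠ d ∧
  G.Adj a c ∧ G.Adj a d ∧ G.Adj b c ∧ G.Adj b d ∧ G.Adj c d ∧ ¬ G.Adj a b

def DiamondFree {V : Type*} (G : SimpleGraph V) : Prop :=
  ∀ a b c d : V, ¬ IsDiamond G a b c d

/-- `r` together with the `t` distinct leaves `f 0, …, f (t-1)` forms an induced `K_{1,t}`
with center `r`. -/
def IsStar {V : Type*} (G : SimpleGraph V) (t : ℕ) (r : V) (f : Fin t → V) : Prop :=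
  Function.Injective f ∧ (∀ i, G.Adj r (f i)) ∧ ∀ i j, i ≠ j → ¬ G.Adj (f i) (f j)

def StarFree {V : Type*} (G : SimpleGraph V) (t : ℕ) : Prop :=
  ∀ (r : V) (f : Fin t → V), ¬ IsStar G t r f

/-!
If a diamond of `G` had a degree-2 vertex outside the independent set `S`, it would survive in
`G ⊕ S`; so both degree-2 vertices `a, b` of any diamond lie in `S`, and its other two vertices
`c, d` do not. Conversely, any `s ∈ S` forms a triangle with `a, b` in `G ⊕ S`, and a common
neighbour of `a, b` outside `S` that missed `s` would complete a diamond there; hence `s` is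
adjacent to `c` and `d`, and `s, a, c, d` is a diamond of `G`.
-/

section

variable {V : Type*} {G : SimpleGraph V} {S : Set V}

lemma scompl_adj_of_adj (hS : ∀ x ∈ S, ∀ y ∈ S, ¬ G.Adj x y) {x y : V} (h : G.Adj x y) :
    (scompl G S).Adj x y :=
  ⟨G.ne_of_adj h, Or.inr ⟨fun hxy => hS x hxy.1 y hxy.2 h, h⟩⟩

lemma scompl_adj_of_mem {x y : V} (hxy : x ≠ y) (hx : x ∈ S) (hy : y ∈ S) (h : ¬ G.Adj x y) :
    (scompl G S).Adj x y :=
  ⟨hxy, Or.inl ⟨hx, hy, h⟩⟩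

lemma not_scompl_adj {x y : V} (hxy : ¬ (x ∈ S ∧ y ∈ S)) (h : ¬ G.Adj x y) :
    ¬ (scompl G S).Adj x y := by
  rintro ⟨-, ⟨hx, hy, -⟩ | ⟨-, h'⟩⟩
  exacts [hxy ⟨hx, hy⟩, h h']

lemma IsDiamond.mem_of_diamondFree_scompl (hS : ∀ x ∈ S, ∀ y ∈ S, ¬ G.Adj x y)
    (hdf : DiamondFree (scompl G S)) {a b c d : V} (h : IsDiamond G a b c d) :
    a ∈ S ∧ b ∈ S := by
  obtain ⟨hab, hac, had, hbc, hbd, hcd, ac, ad, bc, bd, cd, nab⟩ := h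
  by_contra hab_mem
  exact hdf a b c d ⟨hab, hac, had, hbc, hbd, hcd, scompl_adj_of_adj hS ac,
    scompl_adj_of_adj hS ad, scompl_adj_of_adj hS bc, scompl_adj_of_adj hS bd,
    scompl_adj_of_adj hS cd, not_scompl_adj hab_mem nab⟩

lemma adj_of_adj_two_mem (hS : ∀ x ∈ S, ∀ y ∈ S, ¬ G.Adj x y)
    (hdf : DiamondFree (scompl G S)) {a b s x : V} (ha : a ∈ S) (hb : b ∈ S) (hs : s ∈ S)
    (hab : a ≠ b) (hx : x ∉ S) (ax : G.Adj a x) (bx : G.Adj b x) : G.Adj s x := by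
  by_cases hsa : s = a
  · exact hsa ▸ ax
  by_cases hsb : s = b
  · exact hsb ▸ bx
  by_contra sx
  have hxs : x ≠ s := fun h => hx (h ▸ hs)
  exact hdf x s a b ⟨hxs, (G.ne_of_adj ax).symm, (G.ne_of_adj bx).symm, hsa, hsb, hab,
    scompl_adj_of_adj hS ax.symm, scompl_adj_of_adj hS bx.symm,
    scompl_adj_of_mem hsa hs ha (hS s hs a ha), scompl_adj_of_mem hsb hs hb (hS s hs b hb),
    scompl_adj_of_mem hab ha hb (hS a ha b hb),
    not_scompl_adj (fun h => hx h.1) fun h => sx h.symm⟩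

lemma IsDiamond.exists_isDiamond_of_mem (hS : ∀ x ∈ S, ∀ y ∈ S, ¬ G.Adj x y)
    (hdf : DiamondFree (scompl G S)) {a b c d s : V} (h : IsDiamond G a b c d) (hs : s ∈ S) :
    ∃ b c d : V, IsDiamond G s b c d := by
  obtain ⟨ha, hb⟩ := h.mem_of_diamondFree_scompl hS hdf
  by_cases hsa : s = a
  · exact hsa ▸ ⟨b, c, d, h⟩
  obtain ⟨hab, hac, had, -, -, hcd, ac, ad, bc, bd, cd, -⟩ := h
  have hc : c ∉ S := fun hc => hS a ha c hc ac
  have hd : d ∉ S := fun hd => hS a ha d hd ad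
  exact ⟨a, c, d, hsa, fun h => hc (h ▸ hs), fun h => hd (h ▸ hs), hac, had, hcd,
    adj_of_adj_two_mem hS hdf ha hb hs hab hc ac bc,
    adj_of_adj_two_mem hS hdf ha hb hs hab hd ad bd, ac, ad, cd, hS s hs a ha⟩

end

theorem stmt6_general {V : Type*} (G : SimpleGraph V)
    (hdiam : ∃ a b c d : V, IsDiamond G a b c d)
    (S : Set V) (hind : ∀ x ∈ S, ∀ y ∈ S, ¬ G.Adj x y)
    (hdf : DiamondFree (scompl G S)) :
    S = {v : V | ∃ b c d : V, IsDiamond G v b c d} := by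
  obtain ⟨a, b, c, d, h⟩ := hdiam
  ext s
  constructor
  · exact h.exists_isDiamond_of_mem hind hdf
  · rintro ⟨b, c, d, hs⟩
    exact (hs.mem_of_diamondFree_scompl hind hdf).1

theorem stmt6 {V : Type*} [Fintype V] (t : ℕ) (ht : 3 ≤ t) (G : SimpleGraph V)
    (hdiam : ∃ a b c d : V, IsDiamond G a b c d)
    (S : Set V) (hind : ∀ x ∈ S, ∀ y ∈ S, ¬ G.Adj x y)
    (hdf : DiamondFree (scompl G S)) (hsf : StarFree (scompl G S) t) :
    S = {v : V | ∃ b c d : V, IsDiamond G v b c d} :=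
  stmt6_general G hdiam S hind hdf
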